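/- Let G=(V,E) be an undirected connected simple locally finite graph and k > 0 such that κ(x,y) ≥ k for all neighboring x,y. Then for every function f: V → ℝ and every vertex x, Γ₂(f,f)(x) ≥ (1/2)(Δf(x))² + ((1/2)·min_{y∼x}{4/d_y + ⌈k·(d_x∨d_y)⌉/D(x)} − 1)·Γ(f,f)(x), where D(x) = max_{y∼x} d_y, d_x∨d_y = max{d_x,d_y}, and ⌈a⌉ is the least integer ≥ a. -/
import Mathlib

open SimpleGraph Finset

variable {V : Type*}

/-- The probability measure attached to a vertex `x`: uniform on its neighbors. -/
noncomputable def nbrMeasure (G : SimpleGraph V) [G.LocallyFinite] [DecidableRel G.Adj]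
    (x z : V) : ℝ :=
  if G.Adj x z then ((G.degree x : ℝ))⁻¹ else 0

/-- A coupling (transfer plan) between the measures `m_x` and `m_y`. -/
def IsCoupling (G : SimpleGraph V) [G.LocallyFinite] [DecidableRel G.Adj]
    (x y : V) (ξ : V → V → ℝ) : Prop :=
  (∀ u v, 0 ≤ ξ u v) ∧
  (∀ u v, ξ u v ≠ 0 → G.Adj x u ∧ G.Adj y v) ∧
  (∀ u, ∑ v ∈ G.neighborFinset y, ξ u v = nbrMeasure G x u) ∧
  (∀ v, ∑ u ∈ G.neighborFinset x, ξ u v = nbrMeasure G y v)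

/-- The transportation distance `W₁(m_x, m_y)`. -/
noncomputable def W1 (G : SimpleGraph V) [G.LocallyFinite] [DecidableRel G.Adj]
    (x y : V) : ℝ :=
  sInf { c : ℝ | ∃ ξ : V → V → ℝ, IsCoupling G x y ξ ∧
    c = ∑ u ∈ G.neighborFinset x, ∑ v ∈ G.neighborFinset y, (G.dist u v : ℝ) * ξ u v }

/-- Ollivier's Ricci curvature `κ(x,y) = 1 - W₁(m_x,m_y)/d(x,y)`. -/
noncomputable def ricci (G : SimpleGraph V) [G.LocallyFinite] [DecidableRel G.Adj]
    (x y : V) : ℝ :=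
  1 - W1 G x y / (G.dist x y : ℝ)

/-- Positive part of a real number: `a₊ = max a 0`. -/
noncomputable def posPart' (a : ℝ) : ℝ := max a 0

/-- `♯(x,y)`: the number of common neighbors of `x` and `y`. -/
def triangles (G : SimpleGraph V) [G.LocallyFinite] [DecidableEq V] (x y : V) : ℕ :=
  (G.neighborFinset x ∩ G.neighborFinset y).card

/-- The graph Laplacian `Δf(x) = (1/d_x)∑_{y∼x} f(y) - f(x)`. -/
noncomputable def lap (G : SimpleGraph V) [G.LocallyFinite] (f : V → ℝ) (x : V) : ℝ :=
  (G.degree x : ℝ)⁻¹ * ∑ y ∈ G.neighborFinset x, f y - f x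

/-- The Bakry–Émery operator `Γ(f,g)(x) = (1/2)(Δ(fg) - fΔg - gΔf)(x)`. -/
noncomputable def gam (G : SimpleGraph V) [G.LocallyFinite] (f g : V → ℝ) (x : V) : ℝ :=
  (1 / 2) * (lap G (f * g) x - f x * lap G g x - g x * lap G f x)

/-- The Bakry–Émery operator `Γ₂(f,f)(x) = (1/2)(ΔΓ(f,f) - 2Γ(f,Δf))(x)`. -/
noncomputable def gam2 (G : SimpleGraph V) [G.LocallyFinite] (f : V → ℝ) (x : V) : ℝ :=
  (1 / 2) * (lap G (gam G f f) x - 2 * gam G f (lap G f) x)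

/-- `D(x) = max_{y∼x} d_y`. -/
def Dmax (G : SimpleGraph V) [G.LocallyFinite] (x : V) : ℕ :=
  (G.neighborFinset x).sup (fun z => G.degree z)

section Aux

variable (G : SimpleGraph V) [G.LocallyFinite] [DecidableRel G.Adj]

omit [DecidableRel G.Adj] in
lemma lap_eq (f : V → ℝ) {y : V} (h : G.degree y ≠ 0) :
    lap G f y = (G.degree y : ℝ)⁻¹ * ∑ z ∈ G.neighborFinset y, (f z - f y) := by
  have hd : (G.degree y : ℝ) ≠ 0 := Nat.cast_ne_zero.mpr h
  rw [lap, Finset.sum_sub_distrib, Finset.sum_const, G.card_neighborFinset_eq_degree,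
    nsmul_eq_mul, mul_sub, inv_mul_cancel_left₀ hd]

omit [DecidableRel G.Adj] in
lemma gam_eq (f g : V → ℝ) {y : V} (h : G.degree y ≠ 0) :
    gam G f g y = (1/2) * ((G.degree y : ℝ)⁻¹ *
      ∑ z ∈ G.neighborFinset y, (f z - f y) * (g z - g y)) := by
  have hd : (G.degree y : ℝ) ≠ 0 := Nat.cast_ne_zero.mpr h
  have hexp : ∑ z ∈ G.neighborFinset y, (f z - f y) * (g z - g y)
      = ∑ z ∈ G.neighborFinset y, f z * g z - f y * ∑ z ∈ G.neighborFinset y, g z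
        - (∑ z ∈ G.neighborFinset y, f z) * g y + (G.degree y : ℝ) * (f y * g y) := by
    have h1 : ∀ z ∈ G.neighborFinset y, (f z - f y) * (g z - g y)
        = f z * g z - f y * g z - f z * g y + f y * g y := fun z _ => by ring
    rw [Finset.sum_congr rfl h1]
    simp only [Finset.sum_add_distrib, Finset.sum_sub_distrib, ← Finset.mul_sum,
      ← Finset.sum_mul, Finset.sum_const, G.card_neighborFinset_eq_degree, nsmul_eq_mul]
    ring
  rw [gam, lap, lap, lap, hexp]
  simp only [Pi.mul_apply]
  field_simp
  ring

omit [DecidableRel G.Adj] in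
lemma gam_self_eq (f : V → ℝ) {y : V} (h : G.degree y ≠ 0) :
    gam G f f y = (1/2) * ((G.degree y : ℝ)⁻¹ *
      ∑ z ∈ G.neighborFinset y, (f z - f y) ^ 2) := by
  rw [gam_eq G f f h]
  congr 1
  congr 1
  exact Finset.sum_congr rfl fun z _ => (sq _).symm

omit [DecidableRel G.Adj] in
lemma gam2_eq (f : V → ℝ) {x : V} (hx : G.degree x ≠ 0) :
    gam2 G f x = (1/2) * (lap G f x)^2 - gam G f f x +
      (1/4) * ((G.degree x : ℝ)⁻¹ *
        ∑ y ∈ G.neighborFinset x, (G.degree y : ℝ)⁻¹ *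
          ∑ z ∈ G.neighborFinset y, (f z - 2 * f y + f x)^2) := by
  classical
  have hdx : (G.degree x : ℝ) ≠ 0 := Nat.cast_ne_zero.mpr hx
  have hdy : ∀ y ∈ G.neighborFinset x, G.degree y ≠ 0 := by
    intro y hy
    rw [mem_neighborFinset] at hy
    exact ((G.degree_pos_iff_exists_adj y).mpr ⟨x, hy.symm⟩).ne'
  have hC : ∀ y ∈ G.neighborFinset x,
      (G.degree y : ℝ)⁻¹ * ∑ z ∈ G.neighborFinset y, (f z - 2 * f y + f x)^2
      = (G.degree y : ℝ)⁻¹ * ∑ z ∈ G.neighborFinset y, (f z - f y)^2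
        - 2 * ((f y - f x) * ((G.degree y : ℝ)⁻¹ * ∑ z ∈ G.neighborFinset y, (f z - f y)))
        + (f y - f x)^2 := by
    intro y hy
    have hd : (G.degree y : ℝ) ≠ 0 := Nat.cast_ne_zero.mpr (hdy y hy)
    have e : ∑ z ∈ G.neighborFinset y, (f z - 2 * f y + f x)^2
        = ∑ z ∈ G.neighborFinset y, (f z - f y)^2
          - 2 * (f y - f x) * ∑ z ∈ G.neighborFinset y, (f z - f y)
          + (G.degree y : ℝ) * (f y - f x)^2 := by
      have h1 : ∀ z ∈ G.neighborFinset y, (f z - 2 * f y + f x)^2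
          = (f z - f y)^2 - 2 * (f y - f x) * (f z - f y) + (f y - f x)^2 :=
        fun z _ => by ring
      rw [Finset.sum_congr rfl h1]
      simp only [Finset.sum_add_distrib, Finset.sum_sub_distrib, ← Finset.mul_sum,
        Finset.sum_const, G.card_neighborFinset_eq_degree, nsmul_eq_mul]
    rw [e, mul_add, mul_sub, inv_mul_cancel_left₀ hd]
    ring
  have e1 : ∑ y ∈ G.neighborFinset x, gam G f f y
      = ∑ y ∈ G.neighborFinset x,
          (1/2) * ((G.degree y : ℝ)⁻¹ * ∑ z ∈ G.neighborFinset y, (f z - f y)^2) :=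
    Finset.sum_congr rfl fun y hy => gam_self_eq G f (hdy y hy)
  have e2 : ∑ y ∈ G.neighborFinset x, (f y - f x) * (lap G f y - lap G f x)
      = ∑ y ∈ G.neighborFinset x,
          ((f y - f x) * ((G.degree y : ℝ)⁻¹ * ∑ z ∈ G.neighborFinset y, (f z - f y))
            - (f y - f x) * lap G f x) := by
    refine Finset.sum_congr rfl fun y hy => ?_
    rw [lap_eq G f (hdy y hy)]
    ring
  rw [Finset.sum_congr rfl hC, gam2, lap, gam_eq G f (lap G f) hx, e1, e2,
    gam_self_eq G f hx, lap_eq G f hx]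
  simp only [Finset.sum_add_distrib, Finset.sum_sub_distrib, ← Finset.mul_sum,
    ← Finset.sum_mul, Finset.sum_const, G.card_neighborFinset_eq_degree, nsmul_eq_mul]
  ring

end Aux
section Aux2

variable (G : SimpleGraph V) [G.LocallyFinite] [DecidableRel G.Adj]

lemma double_sum_eq [DecidableEq V] (x : V) (F : V → V → ℝ) :
    ∑ y ∈ G.neighborFinset x, ∑ z ∈ G.neighborFinset x ∩ G.neighborFinset y, F y z
      = ∑ p ∈ (G.neighborFinset x ×ˢ G.neighborFinset x).filter (fun p => G.Adj p.1 p.2),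
          F p.1 p.2 := by
  rw [Finset.sum_filter, Finset.sum_product]
  refine Finset.sum_congr rfl fun y hy => ?_
  rw [← Finset.sum_filter]
  congr 1
  ext z
  simp only [Finset.mem_inter, mem_neighborFinset, Finset.mem_filter]

lemma double_sum_swap [DecidableEq V] (x : V) (F : V → V → ℝ) :
    ∑ p ∈ (G.neighborFinset x ×ˢ G.neighborFinset x).filter (fun p => G.Adj p.1 p.2),
        F p.1 p.2
      = ∑ p ∈ (G.neighborFinset x ×ˢ G.neighborFinset x).filter (fun p => G.Adj p.1 p.2),
          F p.2 p.1 := by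
  refine Finset.sum_equiv (Equiv.prodComm V V) ?_ ?_
  · rintro ⟨a, b⟩
    simp only [Finset.mem_filter, Finset.mem_product, Equiv.prodComm_apply, Prod.swap_prod_mk]
    constructor
    · rintro ⟨⟨h1, h2⟩, h3⟩; exact ⟨⟨h2, h1⟩, h3.symm⟩
    · rintro ⟨⟨h1, h2⟩, h3⟩; exact ⟨⟨h2, h1⟩, h3.symm⟩
  · intro p _; rfl

lemma sym_bound [DecidableEq V] (f : V → ℝ) (x : V) (hx : (G.neighborFinset x).Nonempty) :
    (Dmax G x : ℝ)⁻¹ *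
        ∑ y ∈ G.neighborFinset x,
          ((G.neighborFinset x ∩ G.neighborFinset y).card : ℝ) * (f y - f x)^2
      ≤ ∑ y ∈ G.neighborFinset x, (G.degree y : ℝ)⁻¹ *
          ∑ z ∈ G.neighborFinset x ∩ G.neighborFinset y, (f z - 2 * f y + f x)^2 := by
  classical
  obtain ⟨y0, hy0⟩ := hx
  have hdy : ∀ y ∈ G.neighborFinset x, 0 < G.degree y := by
    intro y hy
    rw [mem_neighborFinset] at hy
    exact (G.degree_pos_iff_exists_adj y).mpr ⟨x, hy.symm⟩
  have hD : 0 < (Dmax G x : ℝ) := by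
    have : 0 < Dmax G x := lt_of_lt_of_le (hdy y0 hy0) (Finset.le_sup (f := fun z => G.degree z) hy0)
    exact_mod_cast this
  have hDy : ∀ y ∈ G.neighborFinset x, (Dmax G x : ℝ)⁻¹ ≤ (G.degree y : ℝ)⁻¹ := by
    intro y hy
    have h1 : (0:ℝ) < G.degree y := by exact_mod_cast hdy y hy
    have h2 : (G.degree y : ℝ) ≤ (Dmax G x : ℝ) := by
      exact_mod_cast Finset.le_sup (f := fun z => G.degree z) hy
    exact inv_anti₀ h1 h2
  set P := (G.neighborFinset x ×ˢ G.neighborFinset x).filter (fun p => G.Adj p.1 p.2) with hP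
  set F : V → V → ℝ := fun y z => (G.degree y : ℝ)⁻¹ * (f z - 2 * f y + f x)^2 with hF
  have hRHS : ∑ y ∈ G.neighborFinset x, (G.degree y : ℝ)⁻¹ *
      ∑ z ∈ G.neighborFinset x ∩ G.neighborFinset y, (f z - 2 * f y + f x)^2
      = ∑ p ∈ P, F p.1 p.2 := by
    rw [← double_sum_eq]
    exact Finset.sum_congr rfl fun y _ => Finset.mul_sum _ _ _
  have hp : ∀ p ∈ P, p.1 ∈ G.neighborFinset x ∧ p.2 ∈ G.neighborFinset x := by
    intro p hp
    rw [hP, Finset.mem_filter, Finset.mem_product] at hp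
    exact hp.1
  have key : ∀ p ∈ P,
      (Dmax G x : ℝ)⁻¹ * ((f p.1 - f x)^2 + (f p.2 - f x)^2) ≤ F p.1 p.2 + F p.2 p.1 := by
    intro p hpP
    obtain ⟨h1, h2⟩ := hp p hpP
    set a := f p.1 - f x
    set b := f p.2 - f x
    have e1 : f p.2 - 2 * f p.1 + f x = b - 2 * a := by simp [a, b]; ring
    have e2 : f p.1 - 2 * f p.2 + f x = a - 2 * b := by simp [a, b]; ring
    have i1 : (Dmax G x : ℝ)⁻¹ * (b - 2*a)^2 ≤ (G.degree p.1 : ℝ)⁻¹ * (b - 2*a)^2 :=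
      mul_le_mul_of_nonneg_right (hDy _ h1) (sq_nonneg _)
    have i2 : (Dmax G x : ℝ)⁻¹ * (a - 2*b)^2 ≤ (G.degree p.2 : ℝ)⁻¹ * (a - 2*b)^2 :=
      mul_le_mul_of_nonneg_right (hDy _ h2) (sq_nonneg _)
    have i3 : (Dmax G x : ℝ)⁻¹ * (a^2 + b^2) ≤
        (Dmax G x : ℝ)⁻¹ * ((b - 2*a)^2 + (a - 2*b)^2) := by
      have h4 : a^2 + b^2 ≤ (b - 2*a)^2 + (a - 2*b)^2 := by nlinarith [sq_nonneg (a - b)]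
      exact mul_le_mul_of_nonneg_left h4 (le_of_lt (inv_pos.mpr hD))
    rw [hF]
    simp only [e1, e2]
    calc (Dmax G x : ℝ)⁻¹ * (a^2 + b^2)
        ≤ (Dmax G x : ℝ)⁻¹ * ((b - 2*a)^2 + (a - 2*b)^2) := i3
      _ = (Dmax G x : ℝ)⁻¹ * (b - 2*a)^2 + (Dmax G x : ℝ)⁻¹ * (a - 2*b)^2 := by ring
      _ ≤ (G.degree p.1 : ℝ)⁻¹ * (b - 2*a)^2 + (G.degree p.2 : ℝ)⁻¹ * (a - 2*b)^2 :=
          add_le_add i1 i2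
  have hsum : ∑ p ∈ P, (Dmax G x : ℝ)⁻¹ * ((f p.1 - f x)^2 + (f p.2 - f x)^2)
      ≤ ∑ p ∈ P, (F p.1 p.2 + F p.2 p.1) := Finset.sum_le_sum key
  have hswapF : ∑ p ∈ P, (F p.1 p.2 + F p.2 p.1) = 2 * ∑ p ∈ P, F p.1 p.2 := by
    rw [Finset.sum_add_distrib, ← double_sum_swap G x (fun y z => F y z)]
    ring
  have hswapa : ∑ p ∈ P, (f p.2 - f x)^2 = ∑ p ∈ P, (f p.1 - f x)^2 :=
    (double_sum_swap G x (fun y z => (f y - f x)^2)).symm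
  have hLHS : ∑ p ∈ P, (Dmax G x : ℝ)⁻¹ * ((f p.1 - f x)^2 + (f p.2 - f x)^2)
      = 2 * ((Dmax G x : ℝ)⁻¹ *
          ∑ y ∈ G.neighborFinset x,
            ((G.neighborFinset x ∩ G.neighborFinset y).card : ℝ) * (f y - f x)^2) := by
    have hcount : ∑ p ∈ P, (f p.1 - f x)^2
        = ∑ y ∈ G.neighborFinset x,
            ((G.neighborFinset x ∩ G.neighborFinset y).card : ℝ) * (f y - f x)^2 := by
      rw [← double_sum_eq G x (fun y z => (f y - f x)^2)]
      refine Finset.sum_congr rfl fun y _ => ?_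
      rw [Finset.sum_const, nsmul_eq_mul]
    simp only [mul_add, Finset.sum_add_distrib, ← Finset.mul_sum]
    rw [hswapa, hcount]
    ring
  rw [hRHS]
  linarith [hsum, hswapF, hLHS]

end Aux2
section Aux3

variable (G : SimpleGraph V) [G.LocallyFinite] [DecidableRel G.Adj]

lemma nbrMeasure_nonneg (x u : V) : 0 ≤ nbrMeasure G x u := by
  rw [nbrMeasure]
  split <;> positivity

lemma nbrMeasure_sum (x : V) (h : G.degree x ≠ 0) :
    ∑ u ∈ G.neighborFinset x, nbrMeasure G x u = 1 := by
  have hd : (G.degree x : ℝ) ≠ 0 := Nat.cast_ne_zero.mpr h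
  have : ∀ u ∈ G.neighborFinset x, nbrMeasure G x u = (G.degree x : ℝ)⁻¹ := by
    intro u hu
    rw [mem_neighborFinset] at hu
    rw [nbrMeasure, if_pos hu]
  rw [Finset.sum_congr rfl this, Finset.sum_const, G.card_neighborFinset_eq_degree,
    nsmul_eq_mul, mul_inv_cancel₀ hd]

lemma exists_coupling (x y : V) (hx : G.degree x ≠ 0) (hy : G.degree y ≠ 0) :
    IsCoupling G x y (fun u v => nbrMeasure G x u * nbrMeasure G y v) := by
  refine ⟨fun u v => mul_nonneg (nbrMeasure_nonneg G x u) (nbrMeasure_nonneg G y v),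
    ?_, ?_, ?_⟩
  · intro u v h
    constructor
    · by_contra hadj
      exact h (by show nbrMeasure G x u * nbrMeasure G y v = 0
                  rw [nbrMeasure, if_neg hadj, zero_mul])
    · by_contra hadj
      exact h (by show nbrMeasure G x u * nbrMeasure G y v = 0
                  have : nbrMeasure G y v = 0 := by rw [nbrMeasure, if_neg hadj]
                  rw [this, mul_zero])
  · intro u
    rw [← Finset.mul_sum, nbrMeasure_sum G y hy, mul_one]
  · intro v
    rw [← Finset.sum_mul, nbrMeasure_sum G x hx, one_mul]

lemma cost_lower_bound [DecidableEq V] (hG : G.Connected) {x y : V} (hxy : G.Adj x y)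
    {ξ : V → V → ℝ} (hξ : IsCoupling G x y ξ) :
    1 - ((G.neighborFinset x ∩ G.neighborFinset y).card : ℝ) *
        ((max (G.degree x) (G.degree y) : ℕ) : ℝ)⁻¹
      ≤ ∑ u ∈ G.neighborFinset x, ∑ v ∈ G.neighborFinset y, (G.dist u v : ℝ) * ξ u v := by
  obtain ⟨hpos, hsupp, hmx, hmy⟩ := hξ
  have hdx : G.degree x ≠ 0 := ((G.degree_pos_iff_exists_adj x).mpr ⟨y, hxy⟩).ne'
  have hdy : G.degree y ≠ 0 := ((G.degree_pos_iff_exists_adj y).mpr ⟨x, hxy.symm⟩).ne'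
  -- termwise bound
  have key : ∀ u ∈ G.neighborFinset x, ∀ v ∈ G.neighborFinset y,
      ξ u v - (if v = u then ξ u v else 0) ≤ (G.dist u v : ℝ) * ξ u v := by
    intro u _ v _
    by_cases hvu : v = u
    · subst hvu
      simp [SimpleGraph.dist_self]
    · rw [if_neg hvu, sub_zero]
      have h1 : 1 ≤ G.dist u v := hG.pos_dist_of_ne (fun h => hvu h.symm)
      have h1' : (1:ℝ) ≤ (G.dist u v : ℝ) := by exact_mod_cast h1
      nlinarith [hpos u v]
  have step1 : ∑ u ∈ G.neighborFinset x, ∑ v ∈ G.neighborFinset y,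
      (ξ u v - (if v = u then ξ u v else 0))
      ≤ ∑ u ∈ G.neighborFinset x, ∑ v ∈ G.neighborFinset y, (G.dist u v : ℝ) * ξ u v :=
    Finset.sum_le_sum fun u hu => Finset.sum_le_sum (key u hu)
  -- total mass
  have hmass : ∑ u ∈ G.neighborFinset x, ∑ v ∈ G.neighborFinset y, ξ u v = 1 := by
    rw [Finset.sum_congr rfl fun u _ => hmx u, nbrMeasure_sum G x hdx]
  -- diagonal mass
  have hdiag : ∑ u ∈ G.neighborFinset x, ∑ v ∈ G.neighborFinset y,
      (if v = u then ξ u v else 0)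
      = ∑ u ∈ G.neighborFinset x ∩ G.neighborFinset y, ξ u u := by
    have e1 : ∀ u ∈ G.neighborFinset x,
        ∑ v ∈ G.neighborFinset y, (if v = u then ξ u v else 0)
        = if u ∈ G.neighborFinset y then ξ u u else 0 := fun u _ =>
      Finset.sum_ite_eq' (G.neighborFinset y) u (fun v => ξ u v)
    rw [Finset.sum_congr rfl e1, ← Finset.sum_filter, Finset.filter_mem_eq_inter]
  have hdiag_le : ∑ u ∈ G.neighborFinset x ∩ G.neighborFinset y, ξ u u
      ≤ ((G.neighborFinset x ∩ G.neighborFinset y).card : ℝ) *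
        ((max (G.degree x) (G.degree y) : ℕ) : ℝ)⁻¹ := by
    have hbound : ∀ u ∈ G.neighborFinset x ∩ G.neighborFinset y,
        ξ u u ≤ ((max (G.degree x) (G.degree y) : ℕ) : ℝ)⁻¹ := by
      intro u hu
      rw [Finset.mem_inter] at hu
      obtain ⟨hux, huy⟩ := hu
      have hb1 : ξ u u ≤ (G.degree x : ℝ)⁻¹ := by
        have := Finset.single_le_sum (f := fun v => ξ u v)
          (fun v _ => hpos u v) huy
        rw [hmx u] at this
        rwa [nbrMeasure, if_pos ((mem_neighborFinset G x u).mp hux)] at this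
      have hb2 : ξ u u ≤ (G.degree y : ℝ)⁻¹ := by
        have := Finset.single_le_sum (f := fun u' => ξ u' u)
          (fun u' _ => hpos u' u) hux
        rw [hmy u] at this
        rwa [nbrMeasure, if_pos ((mem_neighborFinset G y u).mp huy)] at this
      rcases max_choice (G.degree x) (G.degree y) with h | h <;> rw [h]
      · exact hb1
      · exact hb2
    calc ∑ u ∈ G.neighborFinset x ∩ G.neighborFinset y, ξ u u
        ≤ ∑ _u ∈ G.neighborFinset x ∩ G.neighborFinset y,
            ((max (G.degree x) (G.degree y) : ℕ) : ℝ)⁻¹ := Finset.sum_le_sum hbound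
      _ = ((G.neighborFinset x ∩ G.neighborFinset y).card : ℝ) *
            ((max (G.degree x) (G.degree y) : ℕ) : ℝ)⁻¹ := by
          rw [Finset.sum_const, nsmul_eq_mul]
  have expand : ∑ u ∈ G.neighborFinset x, ∑ v ∈ G.neighborFinset y,
      (ξ u v - (if v = u then ξ u v else 0))
      = 1 - ∑ u ∈ G.neighborFinset x ∩ G.neighborFinset y, ξ u u := by
    simp only [Finset.sum_sub_distrib]
    rw [hmass, hdiag]
  linarith [step1, hdiag_le, expand ▸ step1]

lemma ceil_le_triangles [DecidableEq V] (hG : G.Connected) {k : ℝ} (hk : 0 < k)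
    {x y : V} (hxy : G.Adj x y) (hκ : ricci G x y ≥ k) :
    ((⌈k * ((max (G.degree x) (G.degree y) : ℕ) : ℝ)⌉ : ℤ) : ℝ)
      ≤ ((G.neighborFinset x ∩ G.neighborFinset y).card : ℝ) := by
  have hdx : G.degree x ≠ 0 := ((G.degree_pos_iff_exists_adj x).mpr ⟨y, hxy⟩).ne'
  have hdy : G.degree y ≠ 0 := ((G.degree_pos_iff_exists_adj y).mpr ⟨x, hxy.symm⟩).ne'
  set M : ℝ := ((max (G.degree x) (G.degree y) : ℕ) : ℝ) with hM
  have hMpos : 0 < M := by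
    rw [hM]
    have : 0 < max (G.degree x) (G.degree y) :=
      lt_max_iff.mpr (Or.inl (Nat.pos_of_ne_zero hdx))
    exact_mod_cast this
  set t : ℝ := ((G.neighborFinset x ∩ G.neighborFinset y).card : ℝ) with ht
  -- W1 lower bound
  have hne : Set.Nonempty { c : ℝ | ∃ ξ : V → V → ℝ, IsCoupling G x y ξ ∧
      c = ∑ u ∈ G.neighborFinset x, ∑ v ∈ G.neighborFinset y, (G.dist u v : ℝ) * ξ u v } :=
    ⟨_, ⟨fun u v => nbrMeasure G x u * nbrMeasure G y v, exists_coupling G x y hdx hdy, rfl⟩⟩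
  have hlow : 1 - t * M⁻¹ ≤ W1 G x y := by
    refine le_csInf hne ?_
    rintro c ⟨ξ, hξ, rfl⟩
    exact cost_lower_bound G hG hxy hξ
  -- W1 upper bound from curvature
  have hdist : G.dist x y = 1 := SimpleGraph.dist_eq_one_iff_adj.mpr hxy
  have hup : W1 G x y ≤ 1 - k := by
    have h := hκ
    rw [ricci, hdist] at h
    push_cast at h
    linarith
  have hkM : k * M ≤ t := by
    have h1 : k ≤ t * M⁻¹ := by linarith
    calc k * M ≤ (t * M⁻¹) * M := by
          exact mul_le_mul_of_nonneg_right h1 (le_of_lt hMpos)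
      _ = t := by field_simp
  have : (⌈k * M⌉ : ℤ) ≤ ((G.neighborFinset x ∩ G.neighborFinset y).card : ℤ) := by
    rw [Int.ceil_le]
    push_cast
    exact hkM
  rw [ht]
  exact_mod_cast this

end Aux3
/-- On a connected locally finite graph with `κ(x,y) ≥ k > 0` for all
neighboring `x, y`, the Laplacian satisfies
`Γ₂(f,f)(x) ≥ (1/2)(Δf(x))² + ((1/2)·min_{y∼x}{4/d_y + ⌈k·(d_x∨d_y)⌉/D(x)} - 1)·Γ(f,f)(x)`. -/
theorem CD_inequality_of_ricci_bound (G : SimpleGraph V) [G.LocallyFinite]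
    [DecidableRel G.Adj]
    (hG : G.Connected) (k : ℝ) (hk : 0 < k)
    (hκ : ∀ x y : V, G.Adj x y → ricci G x y ≥ k)
    (f : V → ℝ) (x : V) :
    gam2 G f x ≥
      (1 / 2) * (lap G f x) ^ 2 +
        ((1 / 2) * (⨅ y : G.neighborSet x,
            (4 / (G.degree (y : V) : ℝ) +
              ((⌈k * ((max (G.degree x) (G.degree (y : V)) : ℕ) : ℝ)⌉ : ℤ) : ℝ) /
                (Dmax G x : ℝ))) - 1) * gam G f f x := by
  classical
  by_cases hx : G.degree x = 0
  · -- `x` is isolated: everything is explicit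
    have hempty : G.neighborFinset x = ∅ := by
      rw [← Finset.card_eq_zero, G.card_neighborFinset_eq_degree]; exact hx
    haveI hie : IsEmpty (G.neighborSet x) := by
      refine ⟨fun y => ?_⟩
      have : (y : V) ∈ G.neighborFinset x := (mem_neighborFinset G x (y : V)).mpr y.2
      rw [hempty] at this
      exact absurd this (Finset.notMem_empty _)
    have hinf : (⨅ y : G.neighborSet x,
        (4 / (G.degree (y : V) : ℝ) +
          ((⌈k * ((max (G.degree x) (G.degree (y : V)) : ℕ) : ℝ)⌉ : ℤ) : ℝ) /
            (Dmax G x : ℝ))) = 0 := Real.iInf_of_isEmpty _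
    have l1 : ∀ g : V → ℝ, lap G g x = -g x := by
      intro g
      rw [lap, hempty, hx]
      simp
    have g1 : ∀ f g : V → ℝ, gam G f g x = (1/2) * (f x * g x) := by
      intro f g
      rw [gam, l1, l1, l1, Pi.mul_apply]
      ring
    rw [gam2, l1 (gam G f f), g1 f (lap G f), l1 f, g1 f f, hinf]
    nlinarith [sq_nonneg (f x)]
  · -- main case: `x` has neighbors
    have hxne : (G.neighborFinset x).Nonempty :=
      Finset.card_pos.mp (Nat.pos_of_ne_zero (by rwa [G.card_neighborFinset_eq_degree]))
    obtain ⟨y0, hy0⟩ := hxne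
    have hdy : ∀ y ∈ G.neighborFinset x, 0 < G.degree y := by
      intro y hy
      rw [mem_neighborFinset] at hy
      exact (G.degree_pos_iff_exists_adj y).mpr ⟨x, hy.symm⟩
    have hD : 0 < (Dmax G x : ℝ) := by
      have : 0 < Dmax G x :=
        lt_of_lt_of_le (hdy y0 hy0) (Finset.le_sup (f := fun z => G.degree z) hy0)
      exact_mod_cast this
    set c := (⨅ y : G.neighborSet x,
        (4 / (G.degree (y : V) : ℝ) +
          ((⌈k * ((max (G.degree x) (G.degree (y : V)) : ℕ) : ℝ)⌉ : ℤ) : ℝ) /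
            (Dmax G x : ℝ))) with hc
    -- the infimum is at most each of its entries, which are at most the triangle versions
    have hcle : ∀ y ∈ G.neighborFinset x,
        c ≤ 4 * (G.degree y : ℝ)⁻¹ +
          ((G.neighborFinset x ∩ G.neighborFinset y).card : ℝ) * (Dmax G x : ℝ)⁻¹ := by
      intro y hy
      have hadj : G.Adj x y := (mem_neighborFinset G x y).mp hy
      have hy' : y ∈ G.neighborSet x := hadj
      have hb : BddBelow (Set.range fun (y : G.neighborSet x) =>
          (4 / (G.degree (y : V) : ℝ) +
            ((⌈k * ((max (G.degree x) (G.degree (y : V)) : ℕ) : ℝ)⌉ : ℤ) : ℝ) /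
              (Dmax G x : ℝ))) := (Set.finite_range _).bddBelow
      have h1 := ciInf_le hb (⟨y, hy'⟩ : G.neighborSet x)
      refine le_trans h1 ?_
      have h2 := ceil_le_triangles G hG hk hadj (hκ x y hadj)
      have h3 : ((⌈k * ((max (G.degree x) (G.degree y) : ℕ) : ℝ)⌉ : ℤ) : ℝ) / (Dmax G x : ℝ)
          ≤ ((G.neighborFinset x ∩ G.neighborFinset y).card : ℝ) * (Dmax G x : ℝ)⁻¹ := by
        rw [div_eq_mul_inv]
        exact mul_le_mul_of_nonneg_right h2 (inv_nonneg.mpr hD.le)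
      have h4 : 4 / (G.degree y : ℝ) = 4 * (G.degree y : ℝ)⁻¹ := div_eq_mul_inv 4 _
      exact add_le_add (le_of_eq h4) h3
    -- pointwise lower bound for the inner sums
    have stepA : ∀ y ∈ G.neighborFinset x,
        4 * (f y - f x)^2 +
            ∑ z ∈ G.neighborFinset x ∩ G.neighborFinset y, (f z - 2 * f y + f x)^2
          ≤ ∑ z ∈ G.neighborFinset y, (f z - 2 * f y + f x)^2 := by
      intro y hy
      have hadj : G.Adj x y := (mem_neighborFinset G x y).mp hy
      have hxmem : x ∉ G.neighborFinset x ∩ G.neighborFinset y := by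
        simp [Finset.mem_inter, mem_neighborFinset]
      have hsub : insert x (G.neighborFinset x ∩ G.neighborFinset y) ⊆ G.neighborFinset y := by
        intro z hz
        rcases Finset.mem_insert.mp hz with rfl | hz
        · exact (mem_neighborFinset G y z).mpr hadj.symm
        · exact (Finset.mem_inter.mp hz).2
      have hmono := Finset.sum_le_sum_of_subset_of_nonneg hsub
        (fun z _ _ => sq_nonneg (f z - 2 * f y + f x))
      rw [Finset.sum_insert hxmem] at hmono
      have e : (f x - 2 * f y + f x)^2 = 4 * (f y - f x)^2 := by ring
      linarith
    -- assemble: A + B ≤ T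
    have hstep : (∑ y ∈ G.neighborFinset x, (G.degree y : ℝ)⁻¹ * (4 * (f y - f x)^2))
          + (∑ y ∈ G.neighborFinset x, (G.degree y : ℝ)⁻¹ *
              ∑ z ∈ G.neighborFinset x ∩ G.neighborFinset y, (f z - 2 * f y + f x)^2)
        ≤ ∑ y ∈ G.neighborFinset x, (G.degree y : ℝ)⁻¹ *
            ∑ z ∈ G.neighborFinset y, (f z - 2 * f y + f x)^2 := by
      rw [← Finset.sum_add_distrib]
      refine Finset.sum_le_sum fun y hy => ?_
      have h0 : (0:ℝ) ≤ (G.degree y : ℝ)⁻¹ := by positivity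
      have h1 := mul_le_mul_of_nonneg_left (stepA y hy) h0
      calc (G.degree y : ℝ)⁻¹ * (4 * (f y - f x)^2) + (G.degree y : ℝ)⁻¹ *
              ∑ z ∈ G.neighborFinset x ∩ G.neighborFinset y, (f z - 2 * f y + f x)^2
          = (G.degree y : ℝ)⁻¹ * (4 * (f y - f x)^2 +
              ∑ z ∈ G.neighborFinset x ∩ G.neighborFinset y, (f z - 2 * f y + f x)^2) := by
            ring
        _ ≤ _ := h1
    have hsym := sym_bound G f x ⟨y0, hy0⟩
    -- per-vertex coefficient bound summed
    have hcoef : ∑ y ∈ G.neighborFinset x, c * (f y - f x)^2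
        ≤ (∑ y ∈ G.neighborFinset x, (G.degree y : ℝ)⁻¹ * (4 * (f y - f x)^2))
          + (Dmax G x : ℝ)⁻¹ *
            ∑ y ∈ G.neighborFinset x,
              ((G.neighborFinset x ∩ G.neighborFinset y).card : ℝ) * (f y - f x)^2 := by
      rw [Finset.mul_sum, ← Finset.sum_add_distrib]
      refine Finset.sum_le_sum fun y hy => ?_
      have h1 := mul_le_mul_of_nonneg_right (hcle y hy) (sq_nonneg (f y - f x))
      calc c * (f y - f x)^2
          ≤ (4 * (G.degree y : ℝ)⁻¹ +
              ((G.neighborFinset x ∩ G.neighborFinset y).card : ℝ) * (Dmax G x : ℝ)⁻¹)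
              * (f y - f x)^2 := h1
        _ = (G.degree y : ℝ)⁻¹ * (4 * (f y - f x)^2) +
            (Dmax G x : ℝ)⁻¹ *
              (((G.neighborFinset x ∩ G.neighborFinset y).card : ℝ) * (f y - f x)^2) := by
            ring
    have hT : c * ∑ y ∈ G.neighborFinset x, (f y - f x)^2
        ≤ ∑ y ∈ G.neighborFinset x, (G.degree y : ℝ)⁻¹ *
            ∑ z ∈ G.neighborFinset y, (f z - 2 * f y + f x)^2 := by
      rw [Finset.mul_sum]
      linarith [hcoef, hsym, hstep]
    -- final assembly
    have hdx0 : (0:ℝ) ≤ (G.degree x : ℝ)⁻¹ := by positivity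
    rw [ge_iff_le, gam2_eq G f hx, gam_self_eq G f hx]
    have h5 := mul_le_mul_of_nonneg_left hT hdx0
    nlinarith [h5]
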